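/- Let C ⊆ ℂⁿ be a coisotropic real-linear subspace. Then: (i) g(x, iv) = 0 for all x ∈ C and v ∈ C^ω; (ii) the subspace H_C := {x ∈ C : g(x,w) = 0 for all w ∈ C^ω} is a complex subspace of ℂⁿ (closed under multiplication by i); (iii) ℂⁿ is the direct sum of H_C and C^ω + iC^ω, and these two summands are orthogonal with respect to the Hermitian inner product; and (iv) C = H_C ⊕ C^ω. -/

import Mathlib

/-!
Writing `g` for the real inner product, `ω(u, v) = g(iu, v)` gives `C^ω = (iC)ᗮ`; since
multiplication by `i` is a `g`-isometry squaring to `-1`, this yields `C^ωω = C`. Hence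
`H_C = C ∩ (C^ω)ᗮ` and `(C^ω + iC^ω)ᗮ = (C^ω)ᗮ ∩ C^ωω = H_C`, so (iii) is an orthogonal
decomposition of `ℂⁿ`, and (iv) is the orthogonal decomposition of `C` along `C^ω ⊆ C`.
`H_C` is `i`-invariant because `ω(w, ix) = g(w, x)`, and for an `i`-invariant subspace real
orthogonality is Hermitian orthogonality, as `Im ⟨x, y⟩ = g(ix, y)`.
-/

noncomputable section

variable {n : ℕ}

/-- The real inner product `g(u,v) = Re⟨u,v⟩` on `ℂⁿ`. -/
def gR (u v : EuclideanSpace ℂ (Fin n)) : ℝ :=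
  Complex.re (inner ℂ u v : ℂ)

/-- The standard symplectic form `ω(u,v) = g(iu,v)` on `ℂⁿ`. -/
def omegaR (u v : EuclideanSpace ℂ (Fin n)) : ℝ :=
  gR ((Complex.I : ℂ) • u) v

lemma omegaR_add_right (u v w : EuclideanSpace ℂ (Fin n)) :
    omegaR u (v + w) = omegaR u v + omegaR u w := by
  simp [omegaR, gR, inner_add_right]

lemma omegaR_smul_right (c : ℝ) (u v : EuclideanSpace ℂ (Fin n)) :
    omegaR u (c • v) = c * omegaR u v := by
  simp [omegaR, gR, inner_smul_right, Complex.real_smul, Finset.mul_sum,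
    mul_sub, mul_left_comm]

lemma gR_add_left (u v w : EuclideanSpace ℂ (Fin n)) :
    gR (u + v) w = gR u w + gR v w := by
  simp [gR, inner_add_left]

lemma gR_smul_left (c : ℝ) (u v : EuclideanSpace ℂ (Fin n)) :
    gR (c • u) v = c * gR u v := by
  simp [gR, inner_smul_left, Complex.real_smul, Finset.mul_sum, mul_add,
    mul_assoc, mul_left_comm]

/-- The symplectic orthogonal `C^ω` of a real subspace `C ⊆ ℂⁿ`, as a real subspace. -/
def symplOrth (C : Submodule ℝ (EuclideanSpace ℂ (Fin n))) :
    Submodule ℝ (EuclideanSpace ℂ (Fin n)) where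
  carrier := {v | ∀ u ∈ C, omegaR u v = 0}
  add_mem' := by
    intro a b ha hb u hu
    rw [omegaR_add_right, ha u hu, hb u hu, add_zero]
  zero_mem' := by
    intro u hu
    have := omegaR_smul_right 0 u 0
    simpa using this
  smul_mem' := by
    intro c a ha u hu
    rw [omegaR_smul_right, ha u hu, mul_zero]

/-- Multiplication by `i` as a real-linear map on `ℂⁿ`. -/
def iL : EuclideanSpace ℂ (Fin n) →ₗ[ℝ] EuclideanSpace ℂ (Fin n) where
  toFun v := (Complex.I : ℂ) • v
  map_add' a b := smul_add _ a b
  map_smul' c a := by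
    simp only [RingHom.id_apply]
    exact (smul_comm c (Complex.I : ℂ) a).symm

/-- `H_C = {x ∈ C : g(x,w) = 0 ∀ w ∈ C^ω}`, the Hermitian-orthogonal complement of
`C^ω` inside `C`, as a real subspace. -/
def HC (C : Submodule ℝ (EuclideanSpace ℂ (Fin n))) :
    Submodule ℝ (EuclideanSpace ℂ (Fin n)) where
  carrier := {x | x ∈ C ∧ ∀ w ∈ symplOrth C, gR x w = 0}
  add_mem' := by
    intro a b ha hb
    refine ⟨C.add_mem ha.1 hb.1, fun w hw => ?_⟩
    rw [gR_add_left, ha.2 w hw, hb.2 w hw, add_zero]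
  zero_mem' := by
    refine ⟨C.zero_mem, fun w hw => ?_⟩
    have := gR_smul_left 0 0 w
    simpa using this
  smul_mem' := by
    intro c a ha
    refine ⟨C.smul_mem c ha.1, fun w hw => ?_⟩
    rw [gR_smul_left, ha.2 w hw, mul_zero]

open scoped InnerProductSpace

lemma gR_eq_inner (u v : EuclideanSpace ℂ (Fin n)) : gR u v = ⟪u, v⟫_ℝ := by
  simp [gR, PiLp.inner_apply, Complex.inner]

lemma omegaR_eq_im_inner (u v : EuclideanSpace ℂ (Fin n)) : omegaR u v = (⟪u, v⟫_ℂ).im := by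
  simp [omegaR, gR]

lemma iL_apply (v : EuclideanSpace ℂ (Fin n)) : iL v = Complex.I • v := rfl

lemma gR_comm (u v : EuclideanSpace ℂ (Fin n)) : gR u v = gR v u := by
  simp only [gR_eq_inner, real_inner_comm]

lemma gR_iL_left (u v : EuclideanSpace ℂ (Fin n)) : gR (iL u) v = omegaR u v := rfl

lemma gR_iL_right (u v : EuclideanSpace ℂ (Fin n)) : gR u (iL v) = -omegaR u v := by
  simp [gR, omegaR_eq_im_inner, iL_apply]

lemma omegaR_iL_right (u v : EuclideanSpace ℂ (Fin n)) : omegaR u (iL v) = gR u v := by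
  simp [gR, omegaR_eq_im_inner, iL_apply]

lemma inner_eq_zero_of_gR_of_omegaR {u v : EuclideanSpace ℂ (Fin n)} (hg : gR u v = 0)
    (hω : omegaR u v = 0) : ⟪u, v⟫_ℂ = 0 := by
  rw [omegaR_eq_im_inner] at hω
  exact Complex.ext hg hω

def iIso : EuclideanSpace ℂ (Fin n) ≃ₗᵢ[ℝ] EuclideanSpace ℂ (Fin n) where
  toLinearEquiv :=
    (LinearEquiv.smulOfUnit (Units.mk0 Complex.I Complex.I_ne_zero)).restrictScalars ℝ
  norm_map' v := by simp [LinearEquiv.smulOfUnit, norm_smul]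

lemma iL_comp_iL : (iL : EuclideanSpace ℂ (Fin n) →ₗ[ℝ] _) ∘ₗ iL = -LinearMap.id := by
  ext v : 1
  simp [iL_apply, smul_smul]

lemma map_iL_map_iL (K : Submodule ℝ (EuclideanSpace ℂ (Fin n))) : (K.map iL).map iL = K := by
  rw [← Submodule.map_comp, iL_comp_iL, Submodule.map_neg, Submodule.map_id]

lemma map_iL_orthogonal (K : Submodule ℝ (EuclideanSpace ℂ (Fin n))) :
    Kᗮ.map iL = (K.map iL)ᗮ :=
  Submodule.map_orthogonal_equiv K iIso

lemma symplOrth_eq_orthogonal_map_iL (C : Submodule ℝ (EuclideanSpace ℂ (Fin n))) :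
    symplOrth C = (C.map iL)ᗮ := by
  ext v
  simp [symplOrth, Submodule.mem_orthogonal, omegaR, gR_eq_inner, iL_apply]

lemma symplOrth_symplOrth (C : Submodule ℝ (EuclideanSpace ℂ (Fin n))) :
    symplOrth (symplOrth C) = C := by
  rw [symplOrth_eq_orthogonal_map_iL, symplOrth_eq_orthogonal_map_iL, map_iL_orthogonal,
    map_iL_map_iL, Submodule.orthogonal_orthogonal]

lemma HC_eq_inf_orthogonal (C : Submodule ℝ (EuclideanSpace ℂ (Fin n))) :
    HC C = C ⊓ (symplOrth C)ᗮ := by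
  ext x
  simp [HC, Submodule.mem_orthogonal', gR_eq_inner]

lemma iL_mem_HC {C : Submodule ℝ (EuclideanSpace ℂ (Fin n))} {x : EuclideanSpace ℂ (Fin n)}
    (hx : x ∈ HC C) : iL x ∈ HC C := by
  refine ⟨?_, fun w hw => ?_⟩
  · rw [← symplOrth_symplOrth C]
    intro w hw
    rw [omegaR_iL_right, gR_comm]
    exact hx.2 w hw
  · rw [gR_iL_left]
    exact hw x hx.1

lemma orthogonal_symplOrth_sup_map_iL (C : Submodule ℝ (EuclideanSpace ℂ (Fin n))) :
    (symplOrth C ⊔ (symplOrth C).map iL)ᗮ = HC C := by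
  rw [← Submodule.inf_orthogonal, ← symplOrth_eq_orthogonal_map_iL, symplOrth_symplOrth,
    HC_eq_inf_orthogonal, inf_comm]

lemma inner_eq_zero_of_mem_HC {C : Submodule ℝ (EuclideanSpace ℂ (Fin n))}
    {x y : EuclideanSpace ℂ (Fin n)} (hx : x ∈ HC C)
    (hy : y ∈ symplOrth C ⊔ (symplOrth C).map iL) : ⟪x, y⟫_ℂ = 0 := by
  have hg : ∀ z ∈ HC C, gR z y = 0 := fun z hz => by
    rw [← orthogonal_symplOrth_sup_map_iL, Submodule.mem_orthogonal'] at hz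
    rw [gR_eq_inner]
    exact hz y hy
  exact inner_eq_zero_of_gR_of_omegaR (hg x hx) (by rw [← gR_iL_left]; exact hg _ (iL_mem_HC hx))

lemma HC_sup_symplOrth {C : Submodule ℝ (EuclideanSpace ℂ (Fin n))}
    (hcoiso : symplOrth C ≤ C) : HC C ⊔ symplOrth C = C := by
  rw [HC_eq_inf_orthogonal, sup_comm, inf_comm]
  exact Submodule.sup_orthogonal_inf_of_hasOrthogonalProjection hcoiso

lemma HC_inf_symplOrth (C : Submodule ℝ (EuclideanSpace ℂ (Fin n))) :
    HC C ⊓ symplOrth C = ⊥ := by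
  rw [HC_eq_inf_orthogonal]
  exact ((Submodule.orthogonal_disjoint _).symm.mono_left inf_le_right).eq_bot

/-- For a coisotropic subspace `C ⊆ ℂⁿ`:
(i) `g(x, iv) = 0` for `x ∈ C`, `v ∈ C^ω`;
(ii) `H_C` is a complex subspace (closed under multiplication by `i`);
(iii) `ℂⁿ = H_C ⊕ (C^ω + iC^ω)`, a Hermitian-orthogonal direct sum;
(iv) `C = H_C ⊕ C^ω`. -/
theorem coisotropic_decomposition (n : ℕ)
    (C : Submodule ℝ (EuclideanSpace ℂ (Fin n)))
    (hcoiso : symplOrth C ≤ C) :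
    (∀ x ∈ C, ∀ v ∈ symplOrth C, gR x (iL v) = 0) ∧
    (∀ x ∈ HC C, iL x ∈ HC C) ∧
    (HC C ⊔ (symplOrth C ⊔ (symplOrth C).map iL) = ⊤ ∧
      HC C ⊓ (symplOrth C ⊔ (symplOrth C).map iL) = ⊥ ∧
      ∀ x ∈ HC C, ∀ y ∈ symplOrth C ⊔ (symplOrth C).map iL,
        (inner ℂ x y : ℂ) = 0) ∧
    (HC C ⊔ symplOrth C = C ∧ HC C ⊓ symplOrth C = ⊥) := by
  have hHC := orthogonal_symplOrth_sup_map_iL C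
  refine ⟨fun x hx v hv => ?_, fun x => iL_mem_HC,
    ⟨?_, ?_, fun x hx y => inner_eq_zero_of_mem_HC hx⟩, HC_sup_symplOrth hcoiso, HC_inf_symplOrth C⟩
  · rw [gR_iL_right, hv x hx, neg_zero]
  · rw [← hHC, sup_comm]
    exact Submodule.sup_orthogonal_of_hasOrthogonalProjection
  · rw [← hHC, inf_comm]
    exact Submodule.inf_orthogonal_eq_bot _

end
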